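/- arXiv:1711.06476 — 3 statements merged into one kernel-verified Lean document; each statement's English description precedes it below -/
import Mathlib

section
/- Let m ≥ 1 be an integer and δ₁ > 0. There exists δ₂ = δ₂(δ₁, m) > 0 such that every locally absolutely continuous u : (0,∞) → ℝ with lim_{r→0+} u(r) = 0, lim_{r→∞} u(r) = 0 and E(u) ≤ 4m − δ₁ satisfies |u(r)| ≤ π − δ₂ for all r > 0. -/
open MeasureTheory Filter Set

/-- Local absolute continuity on `(0,∞)`: the fundamental theorem of calculus holds
on every compact subinterval. -/
def LocAC (u : ℝ → ℝ) : Prop :=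
  ∀ a b : ℝ, 0 < a → a ≤ b →
    IntervalIntegrable (deriv u) volume a b ∧ u b - u a = ∫ r in a..b, deriv u r

/-- The `m`-corotational energy `E(u) = (1/2) ∫₀^∞ (u'² + m² sin²(u)/r²) r dr`. -/
noncomputable def corotE (m : ℕ) (u : ℝ → ℝ) : ℝ :=
  (1/2) * ∫ r in Set.Ioi (0:ℝ), (deriv u r ^ 2 + (m:ℝ)^2 * Real.sin (u r) ^ 2 / r ^ 2) * r

open Topology

/-!
Bogomol'nyi's trick. With `G(x) = ∫₀ˣ |sin t| dt`, the AM-GM inequality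
`2 m |sin u| |u'| ≤ (u'² + m² sin² u / r²) r` and the chain rule for the absolutely continuous
function `u` show that the energy density on `(a, b]` controls `2 m |G(u b) - G(u a)|`.
Since `u → 0` at both ends, the pieces `(0, r]` and `(r, ∞)` each carry energy density at least
`2 m |G(u r)|`, so `2 m |G(u r)| ≤ E(u) ≤ 4m - δ₁`. As `G` is odd and increasing with
`G(π - δ) = 1 + cos δ`, this keeps `|u r|` at a fixed distance from `π`; the threshold
`4m = 2 m G(π)` is `2 E(Q)`.
-/

theorem LipschitzWith.comp_absolutelyContinuousOnInterval {X Y : Type*} [PseudoMetricSpace X]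
    [PseudoMetricSpace Y] {G : X → Y} {K : NNReal} {u : ℝ → X} {a b : ℝ}
    (hG : LipschitzWith K G) (hu : AbsolutelyContinuousOnInterval u a b) :
    AbsolutelyContinuousOnInterval (G ∘ u) a b := by
  refine squeeze_zero (fun _ ↦ Finset.sum_nonneg fun _ _ ↦ dist_nonneg) (fun E ↦ ?_)
    (by simpa using Tendsto.const_mul (K : ℝ) hu)
  rw [Finset.mul_sum]
  exact Finset.sum_le_sum fun _ _ ↦ hG.dist_le_mul _ _

theorem AbsolutelyContinuousOnInterval.congr {X : Type*} [PseudoMetricSpace X] {f g : ℝ → X}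
    {a b : ℝ} (hf : AbsolutelyContinuousOnInterval f a b) (hfg : EqOn f g (uIcc a b)) :
    AbsolutelyContinuousOnInterval g a b := by
  refine hf.congr' ?_
  filter_upwards [mem_inf_of_right (mem_principal_self _)] with E hE
  exact Finset.sum_congr rfl fun i hi ↦ by rw [hfg (hE.1 i hi).1, hfg (hE.1 i hi).2]

theorem AbsolutelyContinuousOnInterval.integral_comp_mul_deriv {G G' u : ℝ → ℝ} {K : NNReal}
    {a b : ℝ} (hG : LipschitzWith K G) (hG' : ∀ y, HasDerivAt G (G' y) y)
    (hu : AbsolutelyContinuousOnInterval u a b) :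
    ∫ x in a..b, G' (u x) * deriv u x = G (u b) - G (u a) := by
  refine Eq.trans (intervalIntegral.integral_congr_ae ?_)
    (hG.comp_absolutelyContinuousOnInterval hu).integral_deriv_eq_sub
  filter_upwards [hu.ae_differentiableAt] with x hx hxab
  exact ((hG' (u x)).comp x (hx (uIoc_subset_uIcc hxab)).hasDerivAt).deriv.symm

theorem LocAC.absolutelyContinuousOnInterval {u : ℝ → ℝ} (hu : LocAC u) {a b : ℝ} (ha : 0 < a)
    (hab : a ≤ b) : AbsolutelyContinuousOnInterval u a b := by
  have hprimitive := ((hu a b ha hab).1.absolutelyContinuousOnInterval_intervalIntegral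
    (c := a) left_mem_uIcc).add
    (LipschitzWith.const (u a)).lipschitzOnWith.absolutelyContinuousOnInterval
  refine hprimitive.congr fun x hx ↦ ?_
  rw [uIcc_of_le hab] at hx
  simp [← (hu a x ha hx.1).2]

noncomputable def integralAbsSin (x : ℝ) : ℝ := ∫ t in (0:ℝ)..x, |Real.sin t|

theorem hasDerivAt_integralAbsSin (x : ℝ) : HasDerivAt integralAbsSin |Real.sin x| x :=
  (Real.continuous_sin.abs.integral_hasStrictDerivAt 0 x).hasDerivAt

theorem lipschitzWith_integralAbsSin : LipschitzWith 1 integralAbsSin :=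
  lipschitzWith_of_nnnorm_deriv_le (fun x ↦ (hasDerivAt_integralAbsSin x).differentiableAt)
    fun x ↦ by
      rw [(hasDerivAt_integralAbsSin x).deriv, ← NNReal.coe_le_coe, coe_nnnorm, Real.norm_eq_abs,
        abs_abs, NNReal.coe_one]
      exact Real.abs_sin_le_one x

theorem monotone_integralAbsSin : Monotone integralAbsSin :=
  monotone_of_hasDerivAt_nonneg hasDerivAt_integralAbsSin fun x ↦ abs_nonneg (Real.sin x)

theorem integralAbsSin_zero : integralAbsSin 0 = 0 := intervalIntegral.integral_same

theorem integralAbsSin_neg (x : ℝ) : integralAbsSin (-x) = -integralAbsSin x := by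
  have h := intervalIntegral.integral_comp_neg (a := x) (b := 0) fun t ↦ |Real.sin t|
  simp only [Real.sin_neg, abs_neg, neg_zero] at h
  rw [integralAbsSin, integralAbsSin, ← h, intervalIntegral.integral_symm]

theorem integralAbsSin_abs (x : ℝ) : integralAbsSin |x| = |integralAbsSin x| := by
  rcases le_total 0 x with hx | hx
  · rw [abs_of_nonneg hx, abs_of_nonneg (integralAbsSin_zero ▸ monotone_integralAbsSin hx)]
  · rw [abs_of_nonpos hx, abs_of_nonpos (integralAbsSin_zero ▸ monotone_integralAbsSin hx),
      integralAbsSin_neg]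

theorem integralAbsSin_pi_sub {δ : ℝ} (h₀ : 0 ≤ δ) (hπ : δ ≤ Real.pi) :
    integralAbsSin (Real.pi - δ) = 1 + Real.cos δ := by
  have hsin : EqOn (fun t ↦ |Real.sin t|) Real.sin (uIcc 0 (Real.pi - δ)) := fun t ht ↦ by
    rw [uIcc_of_le (by linarith)] at ht
    exact abs_of_nonneg (Real.sin_nonneg_of_nonneg_of_le_pi ht.1 (by linarith [ht.2]))
  rw [integralAbsSin, intervalIntegral.integral_congr hsin, integral_sin, Real.cos_zero,
    Real.cos_pi_sub]
  ring

theorem abs_sub_add_abs_sub_le_setIntegral_Ioi {f ρ : ℝ → ℝ} {l₀ l₁ r : ℝ}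
    (hρ : IntegrableOn ρ (Ioi 0)) (hρ_nonneg : ∀ s > 0, 0 ≤ ρ s)
    (hf : ∀ a b, 0 < a → a ≤ b → |f b - f a| ≤ ∫ s in Ioc a b, ρ s)
    (h₀ : Tendsto f (𝓝[>] 0) (𝓝 l₀)) (h₁ : Tendsto f atTop (𝓝 l₁)) (hr : 0 < r) :
    |f r - l₀| + |l₁ - f r| ≤ ∫ s in Ioi 0, ρ s := by
  have hmono : ∀ {s t : Set ℝ}, MeasurableSet t → s ⊆ t → t ⊆ Ioi 0 →
      ∫ x in s, ρ x ≤ ∫ x in t, ρ x := fun ht hst ht₀ ↦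
    setIntegral_mono_set (hρ.mono_set ht₀)
      ((ae_restrict_iff' ht).mpr (.of_forall fun x hx ↦ hρ_nonneg x (ht₀ hx))) hst.eventuallyLE
  have hleft : |f r - l₀| ≤ ∫ s in Ioc 0 r, ρ s := by
    refine le_of_tendsto ((tendsto_const_nhds.sub h₀).abs) ?_
    filter_upwards [Ioo_mem_nhdsGT hr] with a ha
    exact (hf a r ha.1 ha.2.le).trans
      (hmono measurableSet_Ioc (Ioc_subset_Ioc_left ha.1.le) Ioc_subset_Ioi_self)
  have hright : |l₁ - f r| ≤ ∫ s in Ioi r, ρ s := by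
    refine le_of_tendsto ((h₁.sub tendsto_const_nhds).abs) ?_
    filter_upwards [eventually_ge_atTop r] with b hb
    exact (hf r b hr hb).trans
      (hmono measurableSet_Ioi Ioc_subset_Ioi_self (Ioi_subset_Ioi hr.le))
  rw [← Ioc_union_Ioi_eq_Ioi hr.le, setIntegral_union (Ioc_disjoint_Ioi le_rfl) measurableSet_Ioi
    (hρ.mono_set Ioc_subset_Ioi_self) (hρ.mono_set (Ioi_subset_Ioi hr.le))]
  exact add_le_add hleft hright

noncomputable def corotDensity (m : ℕ) (u : ℝ → ℝ) (r : ℝ) : ℝ :=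
  (deriv u r ^ 2 + (m:ℝ)^2 * Real.sin (u r) ^ 2 / r ^ 2) * r

theorem corotDensity_nonneg (m : ℕ) (u : ℝ → ℝ) {r : ℝ} (hr : 0 ≤ r) :
    0 ≤ corotDensity m u r := by
  unfold corotDensity
  positivity

theorem two_mul_abs_sin_mul_abs_deriv_le_corotDensity (m : ℕ) (u : ℝ → ℝ) {r : ℝ} (hr : 0 < r) :
    2 * m * |Real.sin (u r)| * |deriv u r| ≤ corotDensity m u r := by
  have hamgm := two_mul_le_add_sq |deriv u r| (m * |Real.sin (u r)| / r)
  rw [sq_abs, div_pow, mul_pow, sq_abs] at hamgm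
  calc 2 * m * |Real.sin (u r)| * |deriv u r|
      = 2 * |deriv u r| * (m * |Real.sin (u r)| / r) * r := by field_simp
    _ ≤ corotDensity m u r := mul_le_mul_of_nonneg_right hamgm hr.le

theorem two_mul_abs_integralAbsSin_sub_le (m : ℕ) {u : ℝ → ℝ} (hu : LocAC u) {a b : ℝ}
    (ha : 0 < a) (hab : a ≤ b) (hint : IntegrableOn (corotDensity m u) (Ioc a b)) :
    2 * m * |integralAbsSin (u b) - integralAbsSin (u a)| ≤ ∫ r in Ioc a b, corotDensity m u r := by
  rw [← (hu.absolutelyContinuousOnInterval ha hab).integral_comp_mul_deriv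
    lipschitzWith_integralAbsSin hasDerivAt_integralAbsSin]
  calc 2 * m * |∫ x in a..b, |Real.sin (u x)| * deriv u x|
      ≤ 2 * m * ∫ x in a..b, |Real.sin (u x)| * |deriv u x| := by
        gcongr
        exact (intervalIntegral.abs_integral_le_integral_abs hab).trans_eq
          (by simp only [abs_mul, abs_abs])
    _ = ∫ x in Ioc a b, 2 * m * |Real.sin (u x)| * |deriv u x| := by
        simp only [intervalIntegral.integral_of_le hab, ← integral_const_mul, mul_assoc]
    _ ≤ ∫ r in Ioc a b, corotDensity m u r := by
        refine integral_mono_of_nonneg (.of_forall fun x ↦ by positivity) hint ?_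
        filter_upwards [self_mem_ae_restrict measurableSet_Ioc] with x hx
        exact two_mul_abs_sin_mul_abs_deriv_le_corotDensity m u (ha.trans hx.1)

theorem two_mul_abs_integralAbsSin_le_corotE (m : ℕ) {u : ℝ → ℝ} (hu : LocAC u)
    (h₀ : Tendsto u (𝓝[>] 0) (𝓝 0)) (h₁ : Tendsto u atTop (𝓝 0))
    (hint : IntegrableOn (corotDensity m u) (Ioi 0)) {r : ℝ} (hr : 0 < r) :
    2 * m * |integralAbsSin (u r)| ≤ corotE m u := by
  have hcont : Continuous fun x ↦ 2 * m * integralAbsSin x :=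
    continuous_const.mul lipschitzWith_integralAbsSin.continuous
  have hlim : ∀ {l : Filter ℝ}, Tendsto u l (𝓝 0) →
      Tendsto (fun x ↦ 2 * m * integralAbsSin (u x)) l (𝓝 0) := fun h ↦ by
    simpa [integralAbsSin_zero, Function.comp_def] using (hcont.tendsto 0).comp h
  have hstep : ∀ a b, 0 < a → a ≤ b →
      |2 * m * integralAbsSin (u b) - 2 * m * integralAbsSin (u a)|
        ≤ ∫ s in Ioc a b, corotDensity m u s := fun a b ha hab ↦ by
    rw [← mul_sub, abs_mul, abs_of_nonneg (by positivity : (0:ℝ) ≤ 2 * m)]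
    exact two_mul_abs_integralAbsSin_sub_le m hu ha hab (hint.mono_set fun s hs ↦ ha.trans hs.1)
  have hbound := abs_sub_add_abs_sub_le_setIntegral_Ioi hint
    (fun s hs ↦ corotDensity_nonneg m u hs.le) hstep (hlim h₀) (hlim h₁) hr
  rw [sub_zero, zero_sub, abs_neg, abs_mul, abs_of_nonneg (by positivity : (0:ℝ) ≤ 2 * m)]
    at hbound
  have hE : corotE m u = 1 / 2 * ∫ s in Ioi 0, corotDensity m u s := rfl
  linarith

theorem pointwise_bound_below_threshold
    (m : ℕ) (hm : 1 ≤ m) (δ₁ : ℝ) (hδ₁ : 0 < δ₁) :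
    ∃ δ₂ : ℝ, 0 < δ₂ ∧
      ∀ u : ℝ → ℝ, LocAC u →
        Tendsto u (nhdsWithin 0 (Set.Ioi 0)) (nhds 0) →
        Tendsto u atTop (nhds 0) →
        IntegrableOn
          (fun r => (deriv u r ^ 2 + (m:ℝ)^2 * Real.sin (u r) ^ 2 / r ^ 2) * r)
          (Set.Ioi (0:ℝ)) →
        corotE m u ≤ 4 * m - δ₁ →
        ∀ r > (0:ℝ), |u r| ≤ Real.pi - δ₂ := by
  have hm₀ : (0:ℝ) < m := by exact_mod_cast hm
  set δ₂ := min 1 (δ₁ / (2 * m))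
  have hδ₂_le_one : δ₂ ≤ 1 := min_le_left _ _
  have hmδ₂ : m * δ₂ ≤ δ₁ / 2 :=
    calc m * δ₂ ≤ m * (δ₁ / (2 * m)) := by gcongr; exact min_le_right _ _
      _ = δ₁ / 2 := by field_simp
  refine ⟨δ₂, by positivity, fun u hu h₀ h₁ hint hE r hr ↦ ?_⟩
  have hG := two_mul_abs_integralAbsSin_le_corotE m hu h₀ h₁ hint hr
  by_contra! hfar
  have hGfar : 1 + Real.cos δ₂ ≤ |integralAbsSin (u r)| := by
    rw [← integralAbsSin_pi_sub (by positivity) (by linarith [Real.pi_gt_three]),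
      ← integralAbsSin_abs]
    exact monotone_integralAbsSin hfar.le
  have hcos : 1 - δ₂ ^ 2 / 2 ≤ Real.cos δ₂ := Real.one_sub_sq_div_two_le_cos
  -- `4m - δ₁ ≥ 2m |G(u r)| ≥ 2m (1 + cos δ₂) ≥ 4m - m δ₂² ≥ 4m - m δ₂ ≥ 4m - δ₁ / 2`
  nlinarith [mul_le_mul_of_nonneg_left hδ₂_le_one (by positivity : 0 ≤ m * δ₂)]
end

section
/- Let m ≥ 1 be an integer and let v : (0,∞) → ℝ be continuously differentiable with compact support in (0,∞). Set u(r) = r^m v(r). Then ∫₀^∞ (u'(r)² + m² u(r)²/r²) r dr = ∫₀^∞ v'(r)² r^{2m+1} dr; that is, the map u ↦ u/r^m is an isometry (up to the constant surface measure factor) from the X² norm onto the norm of radial Ḣ¹(ℝ^{2m+2}). -/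
/-! Since `u' = m r^{m-1} v + r^m v'`, pointwise `(u'² + m² u²/r²) r = v'² r^{2m+1} + (m r^{2m} v²)'`,
and the exact derivative integrates to zero over `(0, ∞)` because `m r^{2m} v²` has compact
support and vanishes at `0`. -/

open MeasureTheory Filter Set

theorem HasCompactSupport.sq {α β : Type*} [TopologicalSpace α] [MonoidWithZero β] {f : α → β}
    (hf : HasCompactSupport f) : HasCompactSupport (fun x => f x ^ 2) :=
  hf.comp_left (g := (· ^ 2)) (zero_pow two_ne_zero)

theorem X2_integrand_eq_add_deriv (m : ℕ) {v : ℝ → ℝ} {r : ℝ} (hv : DifferentiableAt ℝ v r)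
    (hr : r ≠ 0) :
    (deriv (fun ρ => ρ ^ m * v ρ) r ^ 2 + (m:ℝ)^2 * (r ^ m * v r) ^ 2 / r ^ 2) * r
      = deriv v r ^ 2 * r ^ (2 * m + 1) + deriv (fun ρ => (m:ℝ) * ρ ^ (2 * m) * v ρ ^ 2) r := by
  have hu : HasDerivAt (fun ρ => ρ ^ m * v ρ) (m * r ^ (m - 1) * v r + r ^ m * deriv v r) r :=
    (hasDerivAt_pow m r).mul hv.hasDerivAt
  have hF : HasDerivAt (fun ρ => (m:ℝ) * ρ ^ (2 * m) * v ρ ^ 2)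
      (m * ((2 * m : ℕ) * r ^ (2 * m - 1)) * v r ^ 2
        + m * r ^ (2 * m) * ((2 : ℕ) * v r ^ (2 - 1) * deriv v r)) r :=
    ((hasDerivAt_pow (2 * m) r).const_mul (m:ℝ)).mul (hv.hasDerivAt.pow 2)
  rw [hu.deriv, hF.deriv]
  rcases m with _ | k
  · simp
  · rw [show 2 * (k + 1) - 1 = 2 * k + 1 by omega, Nat.add_sub_cancel]
    push_cast
    field_simp
    ring

theorem X2_isometry_to_higher_dimensional_H1_general
    (m : ℕ) (v : ℝ → ℝ) (hv : ContDiff ℝ 1 v)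
    (hcpt : HasCompactSupport v) :
    (∫ r in Set.Ioi (0:ℝ),
        (deriv (fun ρ => ρ ^ m * v ρ) r ^ 2
          + (m:ℝ)^2 * (r ^ m * v r) ^ 2 / r ^ 2) * r)
      = ∫ r in Set.Ioi (0:ℝ), deriv v r ^ 2 * r ^ (2 * m + 1) := by
  set F : ℝ → ℝ := fun ρ => (m:ℝ) * ρ ^ (2 * m) * v ρ ^ 2
  have hF : ContDiff ℝ 1 F := by fun_prop
  have hFcpt : HasCompactSupport F := hcpt.sq.mul_left (f := fun ρ => (m:ℝ) * ρ ^ (2 * m))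
  have hF0 : F 0 = 0 := by cases m <;> simp [F]
  have hint : IntegrableOn (fun r => deriv v r ^ 2 * r ^ (2 * m + 1)) (Ioi 0) :=
    have hdv : Continuous (deriv v) := hv.continuous_deriv le_rfl
    (by fun_prop : Continuous _).integrable_of_hasCompactSupport hcpt.deriv.sq.mul_right
      |>.integrableOn
  have hFint : IntegrableOn (deriv F) (Ioi 0) :=
    (hF.continuous_deriv le_rfl).integrable_of_hasCompactSupport hFcpt.deriv |>.integrableOn
  calc _ = ∫ r in Ioi (0:ℝ), (deriv v r ^ 2 * r ^ (2 * m + 1) + deriv F r) :=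
        setIntegral_congr_fun measurableSet_Ioi fun r hr =>
          X2_integrand_eq_add_deriv m ((hv.differentiable one_ne_zero) r) (ne_of_gt hr)
    _ = _ := by
      rw [integral_add hint hFint, hFcpt.integral_Ioi_deriv_eq hF, hF0, neg_zero, add_zero]

/-- The substitution `u(r) = r^m v(r)` carries the `X²` norm onto the radial
`Ḣ¹(ℝ^{2m+2})` norm (up to the constant surface measure factor). -/
theorem X2_isometry_to_higher_dimensional_H1
    (m : ℕ) (hm : 1 ≤ m) (v : ℝ → ℝ) (hv : ContDiff ℝ 1 v)
    (hcpt : HasCompactSupport v) (hsupp : tsupport v ⊆ Set.Ioi (0:ℝ)) :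
    (∫ r in Set.Ioi (0:ℝ),
        (deriv (fun ρ => ρ ^ m * v ρ) r ^ 2
          + (m:ℝ)^2 * (r ^ m * v r) ^ 2 / r ^ 2) * r)
      = ∫ r in Set.Ioi (0:ℝ), deriv v r ^ 2 * r ^ (2 * m + 1) :=
  X2_isometry_to_higher_dimensional_H1_general m v hv hcpt
end

section
/- Let m ≥ 1 be an integer, let φ, ψ : (0,∞) → ℝ have finite X² norm, and let λ_n, μ_n > 0 be sequences with λ_n/μ_n + μ_n/λ_n → ∞ as n → ∞. Then ∫₀^∞ |φ(r/λ_n)| |ψ(r/μ_n)| r^{−1} dr → 0 as n → ∞. -/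
open MeasureTheory Filter Set

/-!
The `X²` bound gives `∫ u² dr / r ≤ m⁻² ‖u‖²_{X²}`, so `φ` and `ψ` lie in `L²(dr / r)`, and the
measure `dr / r` is invariant under dilations. Split the cross integral at the geometric mean
`√(λμ)` of the two scales and apply Cauchy–Schwarz to each piece. With `a = √(μ/λ)`, the pieces
are bounded by `√(H_φ(a) H_ψ(1/a))` and `√(T_φ(a) T_ψ(1/a))`, where `H_u(x)` and `T_u(x)` are the
`L²(dr / r)` masses of `u` on `(0, x]` and on `(x, ∞)`. Orthogonality of the scales means that
`a → ∞` or `a → 0`; either way one factor of each product tends to `0` while the other stays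
bounded by the total mass.
-/

open Topology

/-- The square of `‖u / r‖` in `L²(s, r dr)`. -/
noncomputable def radialMass (u : ℝ → ℝ) (s : Set ℝ) : ℝ := ∫ r in s, u r ^ 2 / r

theorem integrableOn_sq_div_of_integrableOn_x2 {c : ℝ} (hc : c ≠ 0) {u : ℝ → ℝ}
    (hu : IntegrableOn (fun r => (deriv u r ^ 2 + c ^ 2 * u r ^ 2 / r ^ 2) * r) (Ioi 0)) :
    IntegrableOn (fun r => u r ^ 2 / r) (Ioi 0) := by
  have hsplit : ∀ r : ℝ, 0 < r → (deriv u r ^ 2 + c ^ 2 * u r ^ 2 / r ^ 2) * r / c ^ 2 =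
      deriv u r ^ 2 * r / c ^ 2 + u r ^ 2 / r := fun r hr => by field_simp
  have hmeas : AEStronglyMeasurable (fun r => u r ^ 2 / r) (volume.restrict (Ioi 0)) := by
    refine ((hu.div_const (c ^ 2)).aestronglyMeasurable.sub
      ((((measurable_deriv u).pow_const 2).mul measurable_id).div_const (c ^ 2)
        |>.aestronglyMeasurable)).congr ?_
    filter_upwards [ae_restrict_mem measurableSet_Ioi] with r (hr : 0 < r)
    simp only [Pi.sub_apply, Pi.mul_apply, id, hsplit r hr, add_sub_cancel_left]
  refine (hu.div_const (c ^ 2)).mono' hmeas ?_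
  filter_upwards [ae_restrict_mem measurableSet_Ioi] with r (hr : 0 < r)
  rw [Real.norm_of_nonneg (by positivity), hsplit r hr]
  exact le_add_of_nonneg_left (by positivity)

theorem setIntegral_comp_div_div (g : ℝ → ℝ) {c : ℝ} (hc : 0 < c) {s : Set ℝ}
    (hs : MeasurableSet s) :
    ∫ r in s, g (r / c) / r = ∫ x in (c * ·) ⁻¹' s, g x / x := by
  have hpre : MeasurableSet ((c * ·) ⁻¹' s) := hs.preimage (measurable_const_mul c)
  conv_lhs => rw [← image_preimage_eq s (mul_left_surjective₀ hc.ne')]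
  rw [integral_image_eq_integral_abs_deriv_smul hpre
    (f := (c * ·)) (f' := fun _ => c)
    (fun x _ => by simpa using ((hasDerivAt_id x).const_mul c).hasDerivWithinAt)
    (mul_right_injective₀ hc.ne').injOn]
  refine setIntegral_congr_fun hpre fun x _ => ?_
  rcases eq_or_ne x 0 with rfl | hx
  · simp
  · simp only [smul_eq_mul, abs_of_pos hc]
    field_simp

theorem integrableOn_comp_div_div_iff (g : ℝ → ℝ) {c : ℝ} (hc : 0 < c) {s : Set ℝ}
    (hs : MeasurableSet s) :
    IntegrableOn (fun r => g (r / c) / r) s ↔ IntegrableOn (fun x => g x / x) ((c * ·) ⁻¹' s) := by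
  have hpre : MeasurableSet ((c * ·) ⁻¹' s) := hs.preimage (measurable_const_mul c)
  conv_lhs => rw [← image_preimage_eq s (mul_left_surjective₀ hc.ne')]
  rw [integrableOn_image_iff_integrableOn_abs_deriv_smul hpre
    (f := (c * ·)) (f' := fun _ => c)
    (fun x _ => by simpa using ((hasDerivAt_id x).const_mul c).hasDerivWithinAt)
    (mul_right_injective₀ hc.ne').injOn]
  refine integrableOn_congr_fun (fun x _ => ?_) hpre
  rcases eq_or_ne x 0 with rfl | hx
  · simp
  · simp only [smul_eq_mul, abs_of_pos hc]
    field_simp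

theorem integral_mul_le_sqrt_mul_integral_sq {α : Type*} [MeasurableSpace α] {μ : Measure α}
    {f g : α → ℝ} (hf0 : 0 ≤ᵐ[μ] f) (hg0 : 0 ≤ᵐ[μ] g) (hf : MemLp f 2 μ) (hg : MemLp g 2 μ) :
    ∫ x, f x * g x ∂μ ≤ √((∫ x, f x ^ 2 ∂μ) * ∫ x, g x ^ 2 ∂μ) := by
  have h := integral_mul_le_Lp_mul_Lq_of_nonneg Real.HolderConjugate.two_two hf0 hg0
    (by simpa using hf) (by simpa using hg)
  rw [Real.sqrt_mul (integral_nonneg fun x => sq_nonneg (f x)), Real.sqrt_eq_rpow,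
    Real.sqrt_eq_rpow]
  simpa using h

theorem sqrt_sq_div_mul_sqrt_sq_div (x y : ℝ) {r : ℝ} (hr : 0 ≤ r) :
    √(x ^ 2 / r) * √(y ^ 2 / r) = |x| * |y| / r := by
  rw [Real.sqrt_div' _ hr, Real.sqrt_div' _ hr, Real.sqrt_sq_eq_abs, Real.sqrt_sq_eq_abs,
    div_mul_div_comm, Real.mul_self_sqrt hr]

section CauchySchwarz

variable {f g : ℝ → ℝ} {s : Set ℝ}

theorem memLp_sqrt_sq_div (hs : MeasurableSet s) (hs0 : s ⊆ Ioi 0)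
    (hf : IntegrableOn (fun r => f r ^ 2 / r) s) :
    MemLp (fun r => √(f r ^ 2 / r)) 2 (volume.restrict s) := by
  refine (memLp_two_iff_integrable_sq
    (Real.continuous_sqrt.comp_aestronglyMeasurable hf.aestronglyMeasurable)).2 ?_
  refine hf.congr_fun (fun r hr => ?_) hs
  have : 0 < r := hs0 hr
  exact (Real.sq_sqrt (by positivity)).symm

theorem integrableOn_abs_mul_abs_div (hs : MeasurableSet s) (hs0 : s ⊆ Ioi 0)
    (hf : IntegrableOn (fun r => f r ^ 2 / r) s) (hg : IntegrableOn (fun r => g r ^ 2 / r) s) :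
    IntegrableOn (fun r => |f r| * |g r| / r) s :=
  IntegrableOn.congr_fun
    ((memLp_sqrt_sq_div hs hs0 hf).integrable_mul (memLp_sqrt_sq_div hs hs0 hg))
    (fun _ hr => sqrt_sq_div_mul_sqrt_sq_div _ _ (hs0 hr).le) hs

theorem setIntegral_abs_mul_abs_div_le (hs : MeasurableSet s) (hs0 : s ⊆ Ioi 0)
    (hf : IntegrableOn (fun r => f r ^ 2 / r) s) (hg : IntegrableOn (fun r => g r ^ 2 / r) s) :
    ∫ r in s, |f r| * |g r| / r ≤ √(radialMass f s * radialMass g s) := by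
  have hsq : ∀ u : ℝ → ℝ, ∫ r in s, √(u r ^ 2 / r) ^ 2 = radialMass u s := fun u =>
    setIntegral_congr_fun hs fun r hr => Real.sq_sqrt (div_nonneg (sq_nonneg _) (hs0 hr).le)
  calc ∫ r in s, |f r| * |g r| / r = ∫ r in s, √(f r ^ 2 / r) * √(g r ^ 2 / r) :=
        setIntegral_congr_fun hs fun r hr => (sqrt_sq_div_mul_sqrt_sq_div _ _ (hs0 hr).le).symm
    _ ≤ √(radialMass f s * radialMass g s) := by
      rw [← hsq f, ← hsq g]
      exact integral_mul_le_sqrt_mul_integral_sq (ae_of_all _ fun _ => Real.sqrt_nonneg _)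
        (ae_of_all _ fun _ => Real.sqrt_nonneg _) (memLp_sqrt_sq_div hs hs0 hf)
        (memLp_sqrt_sq_div hs hs0 hg)

end CauchySchwarz

section RadialMass

variable {u : ℝ → ℝ}

theorem integrableOn_sq_div_comp_div (hu : IntegrableOn (fun r => u r ^ 2 / r) (Ioi 0)) {c : ℝ}
    (hc : 0 < c) : IntegrableOn (fun r => u (r / c) ^ 2 / r) (Ioi 0) :=
  (integrableOn_comp_div_div_iff (fun x => u x ^ 2) hc measurableSet_Ioi).2 <| by
    rwa [preimage_const_mul_Ioi₀ _ hc, zero_div]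

theorem radialMass_comp_div {c : ℝ} (hc : 0 < c) {s : Set ℝ} (hs : MeasurableSet s) :
    radialMass (fun r => u (r / c)) s = radialMass u ((c * ·) ⁻¹' s) :=
  setIntegral_comp_div_div (fun x => u x ^ 2) hc hs

theorem norm_radialMass_le (hu : IntegrableOn (fun r => u r ^ 2 / r) (Ioi 0)) {s : Set ℝ}
    (hs : MeasurableSet s) (hs0 : s ⊆ Ioi 0) : ‖radialMass u s‖ ≤ radialMass u (Ioi 0) := by
  have hnonneg : ∀ r ∈ Ioi (0 : ℝ), 0 ≤ u r ^ 2 / r := fun r (hr : 0 < r) => by positivity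
  unfold radialMass
  rw [Real.norm_of_nonneg (setIntegral_nonneg hs fun r hr => hnonneg r (hs0 hr))]
  exact setIntegral_mono_set hu (ae_restrict_of_forall_mem measurableSet_Ioi hnonneg)
    hs0.eventuallyLE

theorem tendsto_radialMass_Ioi_atTop (hu : IntegrableOn (fun r => u r ^ 2 / r) (Ioi 0)) :
    Tendsto (fun b => radialMass u (Ioi b)) atTop (𝓝 0) := by
  have h := tendsto_setIntegral_of_antitone (μ := volume) (f := fun r => u r ^ 2 / r)
    (fun b : ℝ => measurableSet_Ioi) (fun _ _ hab => Ioi_subset_Ioi hab) ⟨0, hu⟩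
  have hempty : ⋂ b : ℝ, Ioi b = ∅ := eq_empty_of_forall_notMem fun x hx =>
    lt_irrefl x (mem_iInter.1 hx x)
  simpa [radialMass, hempty] using h

theorem tendsto_radialMass_Ioc_nhdsGT (hu : IntegrableOn (fun r => u r ^ 2 / r) (Ioi 0)) :
    Tendsto (fun a => radialMass u (Ioc 0 a)) (𝓝[>] 0) (𝓝 0) := by
  have hvol : Tendsto (fun a => volume.restrict (Ioi 0) (Ioc 0 a)) (𝓝[>] (0 : ℝ)) (𝓝 0) := by
    have hid : Tendsto (fun a : ℝ => ENNReal.ofReal a) (𝓝[>] 0) (𝓝 0) := by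
      simpa using ENNReal.tendsto_ofReal
        (tendsto_nhdsWithin_of_tendsto_nhds (s := Ioi 0) (tendsto_id (x := 𝓝 (0 : ℝ))))
    refine tendsto_of_tendsto_of_tendsto_of_le_of_le tendsto_const_nhds hid (fun _ => zero_le)
      fun a => ?_
    simp
  refine (hu.tendsto_setIntegral_nhds_zero hvol).congr fun a => ?_
  rw [Measure.restrict_restrict measurableSet_Ioc, inter_eq_left.2 Ioc_subset_Ioi_self]
  rfl

end RadialMass

section CrossTerm

variable {φ ψ : ℝ → ℝ}

noncomputable def crossBound (φ ψ : ℝ → ℝ) (a : ℝ) : ℝ :=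
  √(radialMass φ (Ioc 0 a) * radialMass ψ (Ioc 0 a⁻¹)) +
    √(radialMass φ (Ioi a) * radialMass ψ (Ioi a⁻¹))

theorem crossBound_inv (φ ψ : ℝ → ℝ) (a : ℝ) : crossBound φ ψ a⁻¹ = crossBound ψ φ a := by
  rw [crossBound, crossBound, inv_inv, mul_comm (radialMass φ _), mul_comm (radialMass φ _)]

theorem tendsto_crossBound_atTop (hφ : IntegrableOn (fun r => φ r ^ 2 / r) (Ioi 0))
    (hψ : IntegrableOn (fun r => ψ r ^ 2 / r) (Ioi 0)) :
    Tendsto (crossBound φ ψ) atTop (𝓝 0) := by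
  have hHead : Tendsto (fun a => radialMass φ (Ioc 0 a) * radialMass ψ (Ioc 0 a⁻¹)) atTop (𝓝 0) :=
    isBoundedUnder_le_mul_tendsto_zero
      (isBoundedUnder_of ⟨_, fun a => norm_radialMass_le hφ measurableSet_Ioc Ioc_subset_Ioi_self⟩)
      ((tendsto_radialMass_Ioc_nhdsGT hψ).comp tendsto_inv_atTop_nhdsGT_zero)
  have hTail : Tendsto (fun a => radialMass φ (Ioi a) * radialMass ψ (Ioi a⁻¹)) atTop (𝓝 0) :=
    (tendsto_radialMass_Ioi_atTop hφ).zero_mul_isBoundedUnder_le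
      ⟨_, eventually_map.2 <| (eventually_ge_atTop 0).mono fun a ha =>
        norm_radialMass_le hψ measurableSet_Ioi (Ioi_subset_Ioi (inv_nonneg.2 ha))⟩
  have h := hHead.sqrt.add hTail.sqrt
  rw [Real.sqrt_zero, add_zero] at h
  exact h

theorem tendsto_crossBound (hφ : IntegrableOn (fun r => φ r ^ 2 / r) (Ioi 0))
    (hψ : IntegrableOn (fun r => ψ r ^ 2 / r) (Ioi 0)) :
    Tendsto (crossBound φ ψ) (atTop ⊔ 𝓝[>] 0) (𝓝 0) := by
  refine tendsto_sup.2 ⟨tendsto_crossBound_atTop hφ hψ, ?_⟩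
  simpa [Function.comp_def, crossBound_inv] using
    (tendsto_crossBound_atTop hψ hφ).comp tendsto_inv_nhdsGT_zero

theorem setIntegral_cross_le (hφ : IntegrableOn (fun r => φ r ^ 2 / r) (Ioi 0))
    (hψ : IntegrableOn (fun r => ψ r ^ 2 / r) (Ioi 0)) {a b t : ℝ} (ha : 0 < a) (hb : 0 < b)
    (ht : 0 ≤ t) :
    ∫ r in Ioi 0, |φ (r / a)| * |ψ (r / b)| / r ≤
      √(radialMass φ (Ioc 0 (t / a)) * radialMass ψ (Ioc 0 (t / b))) +
        √(radialMass φ (Ioi (t / a)) * radialMass ψ (Ioi (t / b))) := by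
  have hφa := integrableOn_sq_div_comp_div hφ ha
  have hψb := integrableOn_sq_div_comp_div hψ hb
  have hcs : ∀ s ⊆ Ioi 0, MeasurableSet s → ∫ r in s, |φ (r / a)| * |ψ (r / b)| / r ≤
      √(radialMass (fun r => φ (r / a)) s * radialMass (fun r => ψ (r / b)) s) := fun s hs0 hs =>
    setIntegral_abs_mul_abs_div_le hs hs0 (hφa.mono_set hs0) (hψb.mono_set hs0)
  have hint := integrableOn_abs_mul_abs_div measurableSet_Ioi subset_rfl hφa hψb
  calc ∫ r in Ioi 0, |φ (r / a)| * |ψ (r / b)| / r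
      = (∫ r in Ioc 0 t, |φ (r / a)| * |ψ (r / b)| / r) +
          ∫ r in Ioi t, |φ (r / a)| * |ψ (r / b)| / r := by
        rw [← setIntegral_union Ioc_disjoint_Ioi_same measurableSet_Ioi
          (hint.mono_set Ioc_subset_Ioi_self) (hint.mono_set (Ioi_subset_Ioi ht)),
          Ioc_union_Ioi_eq_Ioi ht]
    _ ≤ _ := add_le_add (hcs _ Ioc_subset_Ioi_self measurableSet_Ioc)
        (hcs _ (Ioi_subset_Ioi ht) measurableSet_Ioi)
    _ = _ := by
        simp only [radialMass_comp_div ha, radialMass_comp_div hb, measurableSet_Ioc,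
          measurableSet_Ioi, preimage_const_mul_Ioc₀ _ _ ha, preimage_const_mul_Ioc₀ _ _ hb,
          preimage_const_mul_Ioi₀ _ ha, preimage_const_mul_Ioi₀ _ hb, zero_div]

theorem setIntegral_cross_le_crossBound (hφ : IntegrableOn (fun r => φ r ^ 2 / r) (Ioi 0))
    (hψ : IntegrableOn (fun r => ψ r ^ 2 / r) (Ioi 0)) {a b : ℝ} (ha : 0 < a) (hb : 0 < b) :
    ∫ r in Ioi 0, |φ (r / a)| * |ψ (r / b)| / r ≤ crossBound φ ψ √(b / a) := by
  have h₁ : a * √(b / a) / a = √(b / a) := mul_div_cancel_left₀ _ ha.ne'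
  have h₂ : a * √(b / a) / b = (√(b / a))⁻¹ := by
    field_simp
    rw [Real.sq_sqrt (div_pos hb ha).le]
    field_simp
  have h := setIntegral_cross_le hφ hψ ha hb (t := a * √(b / a)) (by positivity)
  rwa [h₁, h₂] at h

end CrossTerm

theorem tendsto_atTop_sup_nhdsGT_zero_of_tendsto_add_inv {α : Type*} {l : Filter α} {ρ : α → ℝ}
    (hρ : ∀ᶠ x in l, 0 < ρ x) (h : Tendsto (fun x => ρ x + (ρ x)⁻¹) l atTop) :
    Tendsto ρ l (atTop ⊔ 𝓝[>] 0) := by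
  rw [tendsto_def]
  intro s hs
  obtain ⟨A, hA⟩ := mem_atTop_sets.1 (mem_sup.1 hs).1
  obtain ⟨δ, hδ, hδs⟩ := mem_nhdsGT_iff_exists_Ioo_subset.1 (mem_sup.1 hs).2
  filter_upwards [hρ, h.eventually_ge_atTop (A + δ⁻¹)] with x hx hxA
  rcases lt_or_ge (ρ x) δ with hlt | hge
  · exact hδs ⟨hx, hlt⟩
  · have : (ρ x)⁻¹ ≤ δ⁻¹ := inv_anti₀ hδ hge
    exact hA _ (by linarith)

theorem tendsto_sqrt_atTop_sup_nhdsGT_zero :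
    Tendsto Real.sqrt (atTop ⊔ 𝓝[>] 0) (atTop ⊔ 𝓝[>] 0) := by
  refine tendsto_sup.2 ⟨Real.tendsto_sqrt_atTop.mono_right le_sup_left, ?_⟩
  refine (tendsto_nhdsWithin_iff.2 ⟨?_, ?_⟩).mono_right le_sup_right
  · simpa using Real.continuous_sqrt.continuousWithinAt.tendsto (s := Ioi 0) (x := 0)
  · exact eventually_nhdsWithin_of_forall fun x hx => Real.sqrt_pos.2 hx

theorem cross_term_vanishes_orthogonal_scales_general
    (m : ℕ) (hm : 1 ≤ m) (φ ψ : ℝ → ℝ)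
    (hφ : IntegrableOn
      (fun r => (deriv φ r ^ 2 + (m:ℝ)^2 * (φ r) ^ 2 / r ^ 2) * r) (Set.Ioi (0:ℝ)))
    (hψ : IntegrableOn
      (fun r => (deriv ψ r ^ 2 + (m:ℝ)^2 * (ψ r) ^ 2 / r ^ 2) * r) (Set.Ioi (0:ℝ)))
    (lam mu : ℕ → ℝ) (hlam : ∀ n, 0 < lam n) (hmu : ∀ n, 0 < mu n)
    (horth : Tendsto (fun n => lam n / mu n + mu n / lam n) atTop atTop) :
    Tendsto (fun n => ∫ r in Set.Ioi (0:ℝ), |φ (r / lam n)| * |ψ (r / mu n)| / r)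
      atTop (nhds 0) := by
  have hm0 : (m : ℝ) ≠ 0 := Nat.cast_ne_zero.2 (by omega)
  have hφ2 := integrableOn_sq_div_of_integrableOn_x2 hm0 hφ
  have hψ2 := integrableOn_sq_div_of_integrableOn_x2 hm0 hψ
  have hscales : Tendsto (fun n => √(mu n / lam n)) atTop (atTop ⊔ 𝓝[>] 0) :=
    tendsto_sqrt_atTop_sup_nhdsGT_zero.comp <|
      tendsto_atTop_sup_nhdsGT_zero_of_tendsto_add_inv
        (Eventually.of_forall fun n => div_pos (hmu n) (hlam n))
        (by simpa only [inv_div, add_comm] using horth)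
  refine squeeze_zero (fun n => setIntegral_nonneg measurableSet_Ioi fun r (hr : 0 < r) => ?_)
    (fun n => setIntegral_cross_le_crossBound hφ2 hψ2 (hlam n) (hmu n))
    ((tendsto_crossBound hφ2 hψ2).comp hscales)
  positivity

/-- Cross terms of profiles with asymptotically orthogonal scales vanish. -/
theorem cross_term_vanishes_orthogonal_scales
    (m : ℕ) (hm : 1 ≤ m) (φ ψ : ℝ → ℝ) (hφAC : LocAC φ) (hψAC : LocAC ψ)
    (hφ : IntegrableOn
      (fun r => (deriv φ r ^ 2 + (m:ℝ)^2 * (φ r) ^ 2 / r ^ 2) * r) (Set.Ioi (0:ℝ)))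
    (hψ : IntegrableOn
      (fun r => (deriv ψ r ^ 2 + (m:ℝ)^2 * (ψ r) ^ 2 / r ^ 2) * r) (Set.Ioi (0:ℝ)))
    (lam mu : ℕ → ℝ) (hlam : ∀ n, 0 < lam n) (hmu : ∀ n, 0 < mu n)
    (horth : Tendsto (fun n => lam n / mu n + mu n / lam n) atTop atTop) :
    Tendsto (fun n => ∫ r in Set.Ioi (0:ℝ), |φ (r / lam n)| * |ψ (r / mu n)| / r)
      atTop (nhds 0) :=
  cross_term_vanishes_orthogonal_scales_general m hm φ ψ hφ hψ lam mu hlam hmu horth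
end
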